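/- arXiv:2101.01300 — 2 statements merged into one kernel-verified Lean document; each statement's English description precedes it below -/
import Mathlib

section
/- Let η = min{ (1 − 3αλ_1)² λ_m , (x̃_k^{(0)})ᵀ C x̃_k^{(0)} } and suppose η > 0 and that for all t ≥ 0, η < (x_k^{(t)})ᵀ C x_k^{(t)} < 1/α. Then with γ = (1 − αη)² ∈ (0,1) and a_1 = Σ_{l=1}^{k−1} (z_{k,l}^{(0)})², one has for all t ≥ 0: Σ_{l=1}^{k−1} (z_{k,l}^{(t)})² ≤ a_1 γ^t. -/
/-!
For `l < k` the direction `q_l` is an eigenvector of `C`, so the deflation term of the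
modified GHA removes exactly the `λ_l z_{k,l}` growth contributed by `C x`: the coefficient
obeys `z_{k,l}^{(t+1)} = (1 - α r_t) z_{k,l}^{(t)}` with `r_t = xᵀ C x`. The bounds
`η < r_t < 1/α` give `0 ≤ 1 - α r_t ≤ 1 - α η`, so the sum of squares contracts by
`(1 - αη)²` at every step.
-/

open Matrix Finset

def toE {d : ℕ} (v : Fin d → ℝ) : EuclideanSpace ℝ (Fin d) := WithLp.toLp 2 v

section ModifiedGHA

variable {R n ι : Type*} [CommRing R] [Fintype n]

def modifiedGHAStep (C : Matrix n n R) (S : Finset ι) (q : ι → n → R) (α : R) (v : n → R) :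
    n → R :=
  v + α • (C *ᵥ v - (v ⬝ᵥ C *ᵥ v) • v - ∑ p ∈ S, (q p ⬝ᵥ C *ᵥ v) • q p)

lemma dotProduct_mulVec_of_mulVec_eq_smul {C : Matrix n n R} (hC : C.IsSymm) {w : n → R}
    {μ : R} (hw : C *ᵥ w = μ • w) (v : n → R) : w ⬝ᵥ C *ᵥ v = μ * (w ⬝ᵥ v) := by
  rw [dotProduct_mulVec, ← mulVec_transpose, hC.eq, hw, smul_dotProduct, smul_eq_mul]

variable [DecidableEq ι] {S : Finset ι} {q : ι → n → R}

lemma dotProduct_sum_smul_of_orthonormal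
    (horth : ∀ i ∈ S, ∀ j ∈ S, q i ⬝ᵥ q j = if i = j then 1 else 0) (c : ι → R) {l : ι}
    (hl : l ∈ S) : q l ⬝ᵥ ∑ p ∈ S, c p • q p = c l := by
  simp only [dotProduct_sum, dotProduct_smul, smul_eq_mul]
  rw [sum_eq_single_of_mem l hl fun p hp hpl => by simp [horth l hl p hp, Ne.symm hpl]]
  simp [horth l hl l hl]

variable {C : Matrix n n R} {lam : ι → R}

lemma dotProduct_modifiedGHAStep (hC : C.IsSymm)
    (horth : ∀ i ∈ S, ∀ j ∈ S, q i ⬝ᵥ q j = if i = j then 1 else 0)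
    (heig : ∀ i ∈ S, C *ᵥ q i = lam i • q i) (α : R) (v : n → R) {l : ι} (hl : l ∈ S) :
    q l ⬝ᵥ modifiedGHAStep C S q α v = (1 - α * (v ⬝ᵥ C *ᵥ v)) * (q l ⬝ᵥ v) := by
  simp only [modifiedGHAStep, dotProduct_add, dotProduct_smul, dotProduct_sub,
    dotProduct_sum_smul_of_orthonormal horth _ hl,
    dotProduct_mulVec_of_mulVec_eq_smul hC (heig l hl), smul_eq_mul]
  ring

lemma sum_sq_dotProduct_modifiedGHAStep (hC : C.IsSymm)
    (horth : ∀ i ∈ S, ∀ j ∈ S, q i ⬝ᵥ q j = if i = j then 1 else 0)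
    (heig : ∀ i ∈ S, C *ᵥ q i = lam i • q i) (α : R) (v : n → R) :
    ∑ l ∈ S, (q l ⬝ᵥ modifiedGHAStep C S q α v) ^ 2
      = (1 - α * (v ⬝ᵥ C *ᵥ v)) ^ 2 * ∑ l ∈ S, (q l ⬝ᵥ v) ^ 2 := by
  rw [mul_sum]
  refine sum_congr rfl fun l hl => ?_
  rw [dotProduct_modifiedGHAStep hC horth heig α v hl, mul_pow]

end ModifiedGHA

lemma sq_one_sub_mul_le_sq_one_sub_mul {α η r : ℝ} (hα : 0 ≤ α) (hηr : η ≤ r)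
    (hr : α * r ≤ 1) : (1 - α * r) ^ 2 ≤ (1 - α * η) ^ 2 :=
  pow_le_pow_left₀ (by linarith) (by nlinarith) 2

lemma sq_one_sub_mul_mem_Ioo {α η : ℝ} (hα : 0 < α) (hη : 0 < η) (hαη : α * η < 1) :
    0 < (1 - α * η) ^ 2 ∧ (1 - α * η) ^ 2 < 1 := by
  have hpos : 0 < α * η := mul_pos hα hη
  constructor <;> nlinarith

theorem modified_GHA_lower_coeff_decay_general
    (d K : ℕ) (hKd : K < d)
    (C : Matrix (Fin d) (Fin d) ℝ) (hC : C.PosSemidef)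
    (lam : ℕ → ℝ) (q : ℕ → EuclideanSpace ℝ (Fin d))
    (horth : ∀ l l', 1 ≤ l → l ≤ d → 1 ≤ l' → l' ≤ d →
      (q l) ⬝ᵥ (q l' : Fin d → ℝ) = if l = l' then 1 else 0)
    (heig : ∀ l, 1 ≤ l → l ≤ d → C.mulVec (q l) = lam l • (q l : Fin d → ℝ))
    (k : ℕ) (hkK : k ≤ K)
    (α : ℝ) (hα : 0 < α)
    (x : ℕ → EuclideanSpace ℝ (Fin d))
    (hiter : ∀ t, x (t + 1) = x t + α •
      (toE (C.mulVec (x t)) - ((x t) ⬝ᵥ C.mulVec (x t)) • x t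
        - ∑ p ∈ Finset.Icc 1 (k - 1), ((q p) ⬝ᵥ C.mulVec (x t)) • q p))
    (η : ℝ)
    (hηpos : 0 < η)
    (hbound : ∀ t, η < (x t) ⬝ᵥ C.mulVec (x t) ∧ (x t) ⬝ᵥ C.mulVec (x t) < 1 / α) :
    (0 < (1 - α * η) ^ 2 ∧ (1 - α * η) ^ 2 < 1) ∧
      ∀ t, ∑ l ∈ Finset.Icc 1 (k - 1), ((q l) ⬝ᵥ (x t : Fin d → ℝ)) ^ 2 ≤
        (∑ l ∈ Finset.Icc 1 (k - 1), ((q l) ⬝ᵥ (x 0 : Fin d → ℝ)) ^ 2)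
          * ((1 - α * η) ^ 2) ^ t := by
  have hsymm : C.IsSymm := isHermitian_iff_isSymm.mp hC.1
  have hmem {l : ℕ} (hl : l ∈ Icc 1 (k - 1)) : 1 ≤ l ∧ l ≤ d := by
    rw [mem_Icc] at hl; omega
  have hαr (t : ℕ) : α * (x t ⬝ᵥ C *ᵥ x t) < 1 := by
    simpa [hα.ne'] using mul_lt_mul_of_pos_left (hbound t).2 hα
  have hstep (t : ℕ) :
      (x (t + 1) : Fin d → ℝ) = modifiedGHAStep C (Icc 1 (k - 1)) (fun p => q p) α (x t) := by
    simp [hiter t, modifiedGHAStep, toE]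
  refine ⟨sq_one_sub_mul_mem_Ioo hα hηpos ((mul_lt_mul_of_pos_left (hbound 0).1 hα).trans
    (hαr 0)), fun t => ?_⟩
  rw [mul_comm]
  refine le_geom (u := fun s => ∑ l ∈ Icc 1 (k - 1), ((q l : Fin d → ℝ) ⬝ᵥ (x s : Fin d → ℝ)) ^ 2)
    (sq_nonneg _) t fun s _ => ?_
  rw [hstep, sum_sq_dotProduct_modifiedGHAStep hsymm
    (fun i hi j hj => horth i j (hmem hi).1 (hmem hi).2 (hmem hj).1 (hmem hj).2)
    (fun i hi => heig i (hmem hi).1 (hmem hi).2)]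
  exact mul_le_mul_of_nonneg_right
    (sq_one_sub_mul_le_sq_one_sub_mul hα.le (hbound s).1.le (hαr s).le)
    (sum_nonneg fun l _ => sq_nonneg _)

/-- Lemma 3 of the paper: linear decay of the lower-order
eigenbasis coefficients `z_{k,l}^{(t)} = q_lᵀ x_k^{(t)}`, `l = 1, …, k−1`, of the
modified GHA iterates, with rate `γ = (1−αη)² ∈ (0,1)` and constant
`a₁ = Σ_{l=1}^{k−1} (z_{k,l}^{(0)})²`. -/
theorem modified_GHA_lower_coeff_decay
    (d K : ℕ) (hK1 : 1 ≤ K) (hKd : K < d)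
    (C : Matrix (Fin d) (Fin d) ℝ) (hC : C.PosSemidef)
    (lam : ℕ → ℝ) (q : ℕ → EuclideanSpace ℝ (Fin d))
    (horth : ∀ l l', 1 ≤ l → l ≤ d → 1 ≤ l' → l' ≤ d →
      (q l) ⬝ᵥ (q l' : Fin d → ℝ) = if l = l' then 1 else 0)
    (heig : ∀ l, 1 ≤ l → l ≤ d → C.mulVec (q l) = lam l • (q l : Fin d → ℝ))
    (hstrict : ∀ l l', 1 ≤ l → l < l' → l' ≤ d → l ≤ K → lam l' < lam l)
    (hmono : ∀ l l', 1 ≤ l → l ≤ l' → l' ≤ d → lam l' ≤ lam l)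
    (hnonneg : ∀ l, 1 ≤ l → l ≤ d → 0 ≤ lam l)
    (hKpos : 0 < lam K)
    (k : ℕ) (hk1 : 1 ≤ k) (hkK : k ≤ K)
    (α : ℝ) (hα : 0 < α)
    (x : ℕ → EuclideanSpace ℝ (Fin d))
    (hiter : ∀ t, x (t + 1) = x t + α •
      (toE (C.mulVec (x t)) - ((x t) ⬝ᵥ C.mulVec (x t)) • x t
        - ∑ p ∈ Finset.Icc 1 (k - 1), ((q p) ⬝ᵥ C.mulVec (x t)) • q p))
    -- `λ_m` : the smallest nonzero eigenvalue of `C`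
    (m : ℕ) (hm1 : 1 ≤ m) (hmd : m ≤ d) (hmne : lam m ≠ 0)
    (hmsmall : ∀ l, 1 ≤ l → l ≤ d → lam l ≠ 0 → lam m ≤ lam l)
    -- `η = min{(1 − 3αλ₁)² λ_m, (x̃_k^{(0)})ᵀ C x̃_k^{(0)}}`
    (η : ℝ)
    (hη : η = min ((1 - 3 * α * lam 1) ^ 2 * lam m)
        ((∑ l ∈ Finset.Icc k d, ((q l) ⬝ᵥ (x 0 : Fin d → ℝ)) • q l) ⬝ᵥ
          C.mulVec (∑ l ∈ Finset.Icc k d, ((q l) ⬝ᵥ (x 0 : Fin d → ℝ)) • q l)))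
    (hηpos : 0 < η)
    (hbound : ∀ t, η < (x t) ⬝ᵥ C.mulVec (x t) ∧ (x t) ⬝ᵥ C.mulVec (x t) < 1 / α) :
    (0 < (1 - α * η) ^ 2 ∧ (1 - α * η) ^ 2 < 1) ∧
      ∀ t, ∑ l ∈ Finset.Icc 1 (k - 1), ((q l) ⬝ᵥ (x t : Fin d → ℝ)) ^ 2 ≤
        (∑ l ∈ Finset.Icc 1 (k - 1), ((q l) ⬝ᵥ (x 0 : Fin d → ℝ)) ^ 2)
          * ((1 - α * η) ^ 2) ^ t :=
  modified_GHA_lower_coeff_decay_general d K hKd C hC lam q horth heig k hkK α hα x hiter η hηpos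
    hbound
end

section
/- Fix a node i and k ∈ {1,...,K}. Let u, v ∈ ℝ^d with ‖u‖ ≤ √3 and ‖v‖ ≤ √3, and suppose the local vectors satisfy ‖x_{i,p}‖² ≤ 3 for p = 1, ..., k−1. Writing H_i(u) and H_i(v) for the local Sanger directions whose k-th argument is u respectively v (with the same vectors x_{i,p} for p < k), one has ‖H_i(u) − H_i(v)‖ ≤ 3(k+2) λ_1 ‖u − v‖, where λ_1 is any upper bound on the largest eigenvalue of C_i. -/
open Matrix Finset

/-- The local Sanger direction with `k`-th argument `u` and fixed lower-order vectors
`x 1, …, x (k−1)`: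
`H(u) = C u − (uᵀ C u) u − Σ_{p=1}^{k−1} (x_pᵀ C u) x_p`. -/
noncomputable def sangerAt {d : ℕ} (C : Matrix (Fin d) (Fin d) ℝ)
    (x : ℕ → EuclideanSpace ℝ (Fin d)) (k : ℕ) (u : EuclideanSpace ℝ (Fin d)) :
    EuclideanSpace ℝ (Fin d) :=
  toE (C.mulVec u) - (u ⬝ᵥ C.mulVec u) • u
    - ∑ p ∈ Finset.Icc 1 (k - 1), ((x p) ⬝ᵥ C.mulVec u) • x p

/-!
With `w = u - v` and `a = ⟪u, C u⟫`, `b = ⟪v, C v⟫`,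
`H(u) - H(v) = (C - a) w - (a - b) v - Σ_p ⟪x_p, C w⟫ x_p`.
Since the spectrum of `C` lies in `[0, λ₁]` and `0 ≤ a ≤ 3 λ₁`, the symmetric operator `C - a`
has norm at most `3 λ₁`; moreover `|a - b| ≤ (‖u‖ + ‖v‖) λ₁ ‖w‖ ≤ 2√3 λ₁ ‖w‖`, and each of the
`k - 1` terms of the sum has norm at most `‖x_p‖² λ₁ ‖w‖ ≤ 3 λ₁ ‖w‖`. This adds up to
`(3 + 6 + 3 (k - 1)) λ₁ ‖w‖`.
-/

open Module.End RealInnerProductSpace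

namespace LinearMap.IsSymmetric

variable {E : Type*} [NormedAddCommGroup E] [InnerProductSpace ℝ E] [FiniteDimensional ℝ E]
  {T : E →ₗ[ℝ] E} {M : ℝ}

theorem norm_apply_le_of_forall_hasEigenvalue (hT : T.IsSymmetric) (hM0 : 0 ≤ M)
    (hM : ∀ μ, HasEigenvalue T μ → |μ| ≤ M) (w : E) : ‖T w‖ ≤ M * ‖w‖ := by
  set b := hT.eigenvectorBasis rfl
  have hsq : ‖T w‖ ^ 2 ≤ (M * ‖w‖) ^ 2 := by
    rw [← b.repr.norm_map, ← b.repr.norm_map w, mul_pow, EuclideanSpace.norm_sq_eq,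
      EuclideanSpace.norm_sq_eq, mul_sum]
    gcongr with i
    rw [hT.eigenvectorBasis_apply_self_apply, norm_mul, mul_pow]
    gcongr
    simpa using hM _ (hT.hasEigenvalue_eigenvalues rfl i)
  exact (pow_le_pow_iff_left₀ (norm_nonneg _) (by positivity) two_ne_zero).1 hsq

theorem norm_apply_sub_smul_le_of_forall_hasEigenvalue (hT : T.IsSymmetric) (hM0 : 0 ≤ M)
    {a : ℝ} (hM : ∀ μ, HasEigenvalue T μ → |μ - a| ≤ M) (w : E) :
    ‖T w - a • w‖ ≤ M * ‖w‖ :=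
  (hT.sub (IsSymmetric.id.smul (conj_trivial a))).norm_apply_le_of_forall_hasEigenvalue hM0
    (fun μ hμ => by simpa using hM _ (hasEigenvalue_sub_iff.1 hμ)) w

end LinearMap.IsSymmetric

namespace LinearMap.IsPositive

variable {E : Type*} [NormedAddCommGroup E] [InnerProductSpace ℝ E] {T : E →ₗ[ℝ] E} {lam : ℝ}

theorem hasEigenvalue_mem_Icc (hT : T.IsPositive) (hMax : ∀ μ, HasEigenvalue T μ → μ ≤ lam)
    {μ : ℝ} (hμ : HasEigenvalue T μ) : μ ∈ Set.Icc 0 lam :=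
  ⟨eigenvalue_nonneg_of_nonneg hμ hT.re_inner_nonneg_right, hMax μ hμ⟩

theorem norm_apply_le [FiniteDimensional ℝ E] (hT : T.IsPositive) (hlam : 0 ≤ lam)
    (hMax : ∀ μ, HasEigenvalue T μ → μ ≤ lam) (w : E) : ‖T w‖ ≤ lam * ‖w‖ := by
  refine hT.isSymmetric.norm_apply_le_of_forall_hasEigenvalue hlam (fun μ hμ => ?_) w
  obtain ⟨hμ0, hμlam⟩ := hT.hasEigenvalue_mem_Icc hMax hμ
  exact abs_le.2 ⟨by linarith, hμlam⟩

theorem norm_apply_sub_smul_le [FiniteDimensional ℝ E] (hT : T.IsPositive)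
    (hMax : ∀ μ, HasEigenvalue T μ → μ ≤ lam) {a : ℝ} (ha : 0 ≤ a) (w : E) :
    ‖T w - a • w‖ ≤ max lam a * ‖w‖ := by
  refine hT.isSymmetric.norm_apply_sub_smul_le_of_forall_hasEigenvalue (le_max_of_le_right ha)
    (fun μ hμ => ?_) w
  obtain ⟨hμ0, hμlam⟩ := hT.hasEigenvalue_mem_Icc hMax hμ
  exact abs_le.2 ⟨by linarith [le_max_right lam a], by linarith [le_max_left lam a]⟩

end LinearMap.IsPositive

section Sanger

variable {E : Type*} [NormedAddCommGroup E] [InnerProductSpace ℝ E]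

noncomputable def sangerDir (T : E →ₗ[ℝ] E) (x : ℕ → E) (k : ℕ) (u : E) : E :=
  T u - ⟪u, T u⟫ • u - ∑ p ∈ Icc 1 (k - 1), ⟪x p, T u⟫ • x p

theorem sangerAt_eq_sangerDir {d : ℕ} (C : Matrix (Fin d) (Fin d) ℝ)
    (x : ℕ → EuclideanSpace ℝ (Fin d)) (k : ℕ) (u : EuclideanSpace ℝ (Fin d)) :
    sangerAt C x k u = sangerDir (toEuclideanLin C) x k u := by
  simp [sangerAt, sangerDir, toE, toLpLin_apply, EuclideanSpace.inner_eq_star_dotProduct,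
    dotProduct_comm]

variable (T : E →ₗ[ℝ] E) (x : ℕ → E) (k : ℕ) (u v : E)

theorem sangerDir_sub_sangerDir :
    sangerDir T x k u - sangerDir T x k v =
      (T (u - v) - ⟪u, T u⟫ • (u - v)) - (⟪u, T u⟫ - ⟪v, T v⟫) • v
        - ∑ p ∈ Icc 1 (k - 1), ⟪x p, T (u - v)⟫ • x p := by
  simp only [sangerDir, map_sub, inner_sub_right, sub_smul, sum_sub_distrib]
  module

theorem norm_sangerDir_sub_le_add :
    ‖sangerDir T x k u - sangerDir T x k v‖ ≤
      ‖T (u - v) - ⟪u, T u⟫ • (u - v)‖ + |⟪u, T u⟫ - ⟪v, T v⟫| * ‖v‖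
        + ∑ p ∈ Icc 1 (k - 1), |⟪x p, T (u - v)⟫| * ‖x p‖ := by
  rw [sangerDir_sub_sangerDir]
  refine (norm_sub_le _ _).trans (add_le_add ((norm_sub_le _ _).trans_eq ?_)
    ((norm_sum_le _ _).trans_eq ?_))
  · rw [norm_smul, Real.norm_eq_abs]
  · simp_rw [norm_smul, Real.norm_eq_abs]

theorem abs_inner_apply_self_sub_le :
    |⟪u, T u⟫ - ⟪v, T v⟫| ≤ ‖u‖ * ‖T (u - v)‖ + ‖u - v‖ * ‖T v‖ := by
  have : ⟪u, T u⟫ - ⟪v, T v⟫ = ⟪u, T (u - v)⟫ + ⟪u - v, T v⟫ := by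
    simp only [map_sub, inner_sub_left, inner_sub_right]; ring
  rw [this]
  exact (abs_add_le _ _).trans
    (add_le_add (abs_real_inner_le_norm _ _) (abs_real_inner_le_norm _ _))

end Sanger

theorem LinearMap.IsPositive.norm_sangerDir_sub_le {E : Type*} [NormedAddCommGroup E]
    [InnerProductSpace ℝ E] [FiniteDimensional ℝ E] {T : E →ₗ[ℝ] E} (hT : T.IsPositive)
    {lam : ℝ} (hlam : 0 ≤ lam) (hMax : ∀ μ, HasEigenvalue T μ → μ ≤ lam)
    {k : ℕ} (hk : 1 ≤ k) {x : ℕ → E} (hx : ∀ p, 1 ≤ p → p ≤ k - 1 → ‖x p‖ ^ 2 ≤ 3)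
    {u v : E} (hu : ‖u‖ ≤ √3) (hv : ‖v‖ ≤ √3) :
    ‖sangerDir T x k u - sangerDir T x k v‖ ≤ 3 * ((k : ℝ) + 2) * lam * ‖u - v‖ := by
  have hTy := hT.norm_apply_le hlam hMax
  have hu2 : ‖u‖ ^ 2 ≤ 3 := (Real.le_sqrt (norm_nonneg u) zero_le_three).1 hu
  have hv2 : ‖v‖ ^ 2 ≤ 3 := (Real.le_sqrt (norm_nonneg v) zero_le_three).1 hv
  have hquad_u : ⟪u, T u⟫ ≤ 3 * lam := calc
    ⟪u, T u⟫ ≤ ‖u‖ * (lam * ‖u‖) := (real_inner_le_norm _ _).trans (by gcongr; exact hTy u)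
    _ = lam * ‖u‖ ^ 2 := by ring
    _ ≤ 3 * lam := by nlinarith
  have hshift : ‖T (u - v) - ⟪u, T u⟫ • (u - v)‖ ≤ 3 * lam * ‖u - v‖ :=
    (hT.norm_apply_sub_smul_le hMax (hT.inner_nonneg_right u) _).trans
      (by gcongr; exact max_le (by linarith) hquad_u)
  have hquad : |⟪u, T u⟫ - ⟪v, T v⟫| * ‖v‖ ≤ 6 * lam * ‖u - v‖ := calc
    _ ≤ (‖u‖ * (lam * ‖u - v‖) + ‖u - v‖ * (lam * ‖v‖)) * ‖v‖ := by
      gcongr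
      exact (abs_inner_apply_self_sub_le T u v).trans (by gcongr <;> apply hTy)
    _ = lam * ‖u - v‖ * (‖u‖ * ‖v‖ + ‖v‖ ^ 2) := by ring
    _ ≤ lam * ‖u - v‖ * (√3 * √3 + 3) := by gcongr
    _ = 6 * lam * ‖u - v‖ := by rw [Real.mul_self_sqrt zero_le_three]; ring
  have hlower : ∀ p ∈ Icc 1 (k - 1), |⟪x p, T (u - v)⟫| * ‖x p‖ ≤ 3 * lam * ‖u - v‖ := by
    intro p hp
    obtain ⟨hp1, hp2⟩ := mem_Icc.1 hp
    calc |⟪x p, T (u - v)⟫| * ‖x p‖ ≤ ‖x p‖ * (lam * ‖u - v‖) * ‖x p‖ := by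
          gcongr
          exact (abs_real_inner_le_norm _ _).trans (by gcongr; exact hTy _)
      _ = ‖x p‖ ^ 2 * (lam * ‖u - v‖) := by ring
      _ ≤ 3 * (lam * ‖u - v‖) := by gcongr; exact hx p hp1 hp2
      _ = 3 * lam * ‖u - v‖ := by ring
  calc _ ≤ _ := norm_sangerDir_sub_le_add T x k u v
    _ ≤ 3 * lam * ‖u - v‖ + 6 * lam * ‖u - v‖ + ∑ p ∈ Icc 1 (k - 1), 3 * lam * ‖u - v‖ :=
      add_le_add (add_le_add hshift hquad) (sum_le_sum hlower)
    _ = 3 * ((k : ℝ) + 2) * lam * ‖u - v‖ := by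
      rw [sum_const, Nat.card_Icc, nsmul_eq_mul, Nat.add_sub_cancel, Nat.cast_sub hk]
      push_cast
      ring

theorem sanger_direction_lipschitz_general
    (d : ℕ)
    (Ci : Matrix (Fin d) (Fin d) ℝ) (hCi : Ci.PosSemidef)
    -- `λ₁` : any upper bound on the largest eigenvalue of `C_i`
    (lam1 : ℝ) (hlam1 : 0 < lam1)
    (hMax : ∀ μ, Module.End.HasEigenvalue (Matrix.toEuclideanLin Ci) μ → μ ≤ lam1)
    (k : ℕ) (hk1 : 1 ≤ k)
    (x : ℕ → EuclideanSpace ℝ (Fin d))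
    (hxb : ∀ p, 1 ≤ p → p ≤ k - 1 → ‖x p‖ ^ 2 ≤ 3)
    (u v : EuclideanSpace ℝ (Fin d))
    (hu : ‖u‖ ≤ Real.sqrt 3) (hv : ‖v‖ ≤ Real.sqrt 3) :
    ‖sangerAt Ci x k u - sangerAt Ci x k v‖ ≤ 3 * ((k : ℝ) + 2) * lam1 * ‖u - v‖ := by
  rw [sangerAt_eq_sangerDir, sangerAt_eq_sangerDir]
  exact (isPositive_toEuclideanLin_iff.2 hCi).norm_sangerDir_sub_le hlam1.le hMax hk1 hxb hu hv

/-- Lemma 10, inner bound, of the paper: the local Sanger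
direction is Lipschitz on the `√3`-ball:
`‖H_i(u) − H_i(v)‖ ≤ 3(k+2) λ₁ ‖u − v‖` whenever `‖u‖, ‖v‖ ≤ √3` and the
lower-order local vectors satisfy `‖x_{i,p}‖² ≤ 3`. -/
theorem sanger_direction_lipschitz
    (d K : ℕ) (hK1 : 1 ≤ K)
    (Ci : Matrix (Fin d) (Fin d) ℝ) (hCi : Ci.PosSemidef)
    -- `λ₁` : any upper bound on the largest eigenvalue of `C_i`
    (lam1 : ℝ) (hlam1 : 0 < lam1)
    (hMax : ∀ μ, Module.End.HasEigenvalue (Matrix.toEuclideanLin Ci) μ → μ ≤ lam1)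
    (k : ℕ) (hk1 : 1 ≤ k) (hkK : k ≤ K)
    (x : ℕ → EuclideanSpace ℝ (Fin d))
    (hxb : ∀ p, 1 ≤ p → p ≤ k - 1 → ‖x p‖ ^ 2 ≤ 3)
    (u v : EuclideanSpace ℝ (Fin d))
    (hu : ‖u‖ ≤ Real.sqrt 3) (hv : ‖v‖ ≤ Real.sqrt 3) :
    ‖sangerAt Ci x k u - sangerAt Ci x k v‖ ≤ 3 * ((k : ℝ) + 2) * lam1 * ‖u - v‖ :=
  sanger_direction_lipschitz_general d Ci hCi lam1 hlam1 hMax k hk1 x hxb u v hu hv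
end
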